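/- For every V ∈ 𝒱 with V(𝐚) = 0, every y ∈ 𝒴₀, and every u ∈ 𝒰₀, the following two edge representations hold: ⟨δE_c(y), u⟩ = Σ_{x∈ℒ} Σ_{j=1}^3 ( V_{T_{x,j},j} + V_{T_{x,j−1},j} ) · D_j u(x), and ⟨δE_a(y), u⟩ = Σ_{x∈ℒ} Σ_{j=1}^3 ( V_{x,j} − V_{x+a_j, j+3} ) · D_j u(x). -/

import Mathlib

/-!
Cauchy–Born part: the point symmetry of `V` gives `∂_{j+3}V(F𝐚) = -∂_jV(F𝐚)`, so on a
triangle `|T| ∂W(F) : G = Σ_{j=1}^3 ∂_jV(F𝐚) · G a_j`, and for `G = ∂_T u` the vector `G a_j`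
is the edge difference `D_j u(x_{T,j})`. Every edge `(x, x + a_j)` lies in exactly two
triangles, one of each orientation, namely `T_{x,j}` and `T_{x,j-1}`; regrouping the sum over
triangles by edges gives the first formula.

Atomistic part: the bond `x → x + a_{j+3}` is the edge `(x - a_j, x)` traversed backwards,
`D_{j+3}u(x) = -D_j u(x - a_j)`, and translating the lattice sum by `a_j` gives the second
formula.
All sums have finitely many nonzero terms because `u` has finite support.
-/

open Real
open scoped BigOperators Classical ENNReal

noncomputable section

namespace AC

/-- The plane `ℝ²` with the Euclidean norm. -/
abbrev E2 := EuclideanSpace ℝ (Fin 2)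

/-- `2 × 2` real matrices. -/
abbrev Mat2 := Matrix (Fin 2) (Fin 2) ℝ

def toE2 (v : Fin 2 → ℝ) : E2 := WithLp.toLp 2 v

/-- The lattice directions `a_j = Q6^(j-1) a_1`, `Q6` the rotation by `π/3`. -/
def avec (j : ℤ) : E2 :=
  toE2 ![Real.cos (((j : ℝ) - 1) * (Real.pi / 3)), Real.sin (((j : ℝ) - 1) * (Real.pi / 3))]

/-- The volume `Ω₀ = √3/2` of a primitive cell. -/
def Om0 : ℝ := Real.sqrt 3 / 2

/-- `𝐚 = (a_1, …, a_6)`. -/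
def aFam : Fin 6 → E2 := fun j => avec ((j : ℕ) + 1)

/-- Matrix-vector multiplication on `E2`. -/
def mvec (F : Mat2) (v : E2) : E2 := toE2 fun i => ∑ k, F i k * v k

/-- `F𝐚 = (F a_1, …, F a_6)`. -/
def Famat (F : Mat2) : Fin 6 → E2 := fun j => mvec F (aFam j)

/-- Lattice coordinates (w.r.t. the basis `a_1, a_2`) of `a_j` (indices mod 6). -/
def ed (j : ℤ) : ℤ × ℤ :=
  match (j % 6).toNat with
  | 1 => (1, 0)
  | 2 => (0, 1)
  | 3 => (-1, 1)
  | 4 => (-1, 0)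
  | 5 => (0, -1)
  | _ => (1, -1)

/-- The lattice point `n₁ a₁ + n₂ a₂`; `ℒ = emb '' (ℤ × ℤ)`. -/
def emb (n : ℤ × ℤ) : E2 := (n.1 : ℝ) • avec 1 + (n.2 : ℝ) • avec 2

/-- Forward finite difference `D_j v(x) = v(x + a_j) - v(x)` in lattice coordinates. -/
def Dd (j : ℤ) (v : ℤ × ℤ → E2) (n : ℤ × ℤ) : E2 := v (n + ed j) - v n

/-- `Dv(x) = (D_1 v(x), …, D_6 v(x))`. -/
def Dfam (y : ℤ × ℤ → E2) (n : ℤ × ℤ) : Fin 6 → E2 := fun j => Dd ((j : ℕ) + 1) y n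

/-- Euclidean dot product. -/
def dotE (v w : E2) : ℝ := ∑ i, v i * w i

/-- Frobenius inner product `A : B`. -/
def frobI (A B : Mat2) : ℝ := ∑ i, ∑ k, A i k * B i k

/-- Frobenius norm. -/
def frobN (A : Mat2) : ℝ := Real.sqrt (∑ i, ∑ k, (A i k) ^ 2)

/-- Outer product `v ⊗ w`. -/
def outer (v w : E2) : Mat2 := fun i k => v i * w k

/-- The element of `(ℝ²)⁶` with `k`-th standard basis vector in slot `j` and `0` elsewhere. -/
def unitv (j : Fin 6) (k : Fin 2) : Fin 6 → E2 := fun i => if i = j then toE2 (Pi.single k 1) else 0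

/-- Partial gradient `∂_j V(g) ∈ ℝ²` of `V` with respect to its `j`-th argument. -/
def pd (V : (Fin 6 → E2) → ℝ) (j : Fin 6) (g : Fin 6 → E2) : E2 :=
  toE2 fun k => deriv (fun t : ℝ => V (g + t • unitv j k)) 0

/-- Second partial derivative `∂_{ij} V(g) ∈ ℝ^{2×2}`. -/
def pd2 (V : (Fin 6 → E2) → ℝ) (i j : Fin 6) (g : Fin 6 → E2) : Mat2 :=
  fun k l => deriv (fun t : ℝ => pd V j (g + t • unitv i k) l) 0

/-- Third partial derivative `∂_{ijk} V(g)`. -/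
def pd3 (V : (Fin 6 → E2) → ℝ) (i j k : Fin 6) (g : Fin 6 → E2) : Fin 2 → Fin 2 → Fin 2 → ℝ :=
  fun p q r => deriv (fun t : ℝ => pd2 V j k (g + t • unitv i p) q r) 0

/-- Operator norm of a matrix viewed as a bilinear form on `ℝ²`. -/
def matOpNorm (A : Mat2) : ℝ :=
  sSup {r : ℝ | ∃ h1 h2 : E2, ‖h1‖ = 1 ∧ ‖h2‖ = 1 ∧ r = ∑ k, ∑ l, A k l * h1 k * h2 l}

/-- Norm of a trilinear form on `ℝ²`. -/
def t3norm (B : Fin 2 → Fin 2 → Fin 2 → ℝ) : ℝ :=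
  sSup {r : ℝ | ∃ h1 h2 h3 : E2, ‖h1‖ = 1 ∧ ‖h2‖ = 1 ∧ ‖h3‖ = 1 ∧
    r = ∑ p, ∑ q, ∑ s, B p q s * h1 p * h2 q * h3 s}

/-- `M₂ = Σ_{i,j} sup_g ‖∂_{ij}V(g)‖`. -/
def M2 (V : (Fin 6 → E2) → ℝ) : ℝ :=
  ∑ i : Fin 6, ∑ j : Fin 6, ⨆ g : Fin 6 → E2, matOpNorm (pd2 V i j g)

/-- `M₃ = Σ_{i,j,k} sup_g ‖∂_{ijk}V(g)‖`. -/
def M3 (V : (Fin 6 → E2) → ℝ) : ℝ :=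
  ∑ i : Fin 6, ∑ j : Fin 6, ∑ k : Fin 6, ⨆ g : Fin 6 → E2, t3norm (pd3 V i j k g)

/-- Finiteness of `M₂`. -/
def M2fin (V : (Fin 6 → E2) → ℝ) : Prop :=
  ∀ i j : Fin 6, BddAbove (Set.range fun g : Fin 6 → E2 => matOpNorm (pd2 V i j g))

/-- Finiteness of `M₃`. -/
def M3fin (V : (Fin 6 → E2) → ℝ) : Prop :=
  ∀ i j k : Fin 6, BddAbove (Set.range fun g : Fin 6 → E2 => t3norm (pd3 V i j k g))

/-- The class `𝒱`: `C³` potentials with the point symmetry `V((-g_{j+3})_j) = V(g)`. -/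
def memV (V : (Fin 6 → E2) → ℝ) : Prop :=
  ContDiff ℝ 3 V ∧ ∀ g : Fin 6 → E2, V (fun j => -g (j + 3)) = V g

/-- Cauchy–Born stored energy `W(F) = V(F𝐚)/Ω₀`. -/
def Wf (V : (Fin 6 → E2) → ℝ) (F : Mat2) : ℝ := V (Famat F) / Om0

/-- `∂W(F) ∈ ℝ^{2×2}`. -/
def DW (V : (Fin 6 → E2) → ℝ) (F : Mat2) : Mat2 :=
  fun i k => deriv (fun t : ℝ => Wf V (F + t • Matrix.single i k 1)) 0

/-- The matrix `G` with `G b₁ = v₁`, `G b₂ = v₂` (for linearly independent `b₁, b₂`). -/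
def solve2 (b1 b2 v1 v2 : E2) : Mat2 := fun i k =>
  (if k = 0 then v1 i * b2 1 - v2 i * b1 1 else v2 i * b1 0 - v1 i * b2 0) /
    (b1 0 * b2 1 - b1 1 * b2 0)

/-- Triangles of the canonical triangulation `𝒯`: `(n, true)` is the upward triangle
with vertices `n, n+a₁, n+a₂`, and `(n, false)` the downward triangle with vertices
`n, n+a₁, n+a₆` (in lattice coordinates). -/
abbrev Tri := (ℤ × ℤ) × Bool

/-- The gradient `∂_T y` of the piecewise affine interpolant of `y` on `T`. -/
def triGrad (y : ℤ × ℤ → E2) (T : Tri) : Mat2 :=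
  if T.2 then solve2 (avec 1) (avec 2) (Dd 1 y T.1) (Dd 2 y T.1)
  else solve2 (avec 1) (avec 6) (Dd 1 y T.1) (Dd 6 y T.1)

/-- The vertices `T ∩ ℒ` of a triangle, in lattice coordinates. -/
def triVerts (T : Tri) : Finset (ℤ × ℤ) :=
  if T.2 then {T.1, T.1 + (1, 0), T.1 + (0, 1)} else {T.1, T.1 + (1, 0), T.1 + (1, -1)}

/-- `x_{T,j}`: the unique lattice point with `x_{T,j}, x_{T,j} + a_{j+1} ∈ T`
(here `j : Fin 6` labels the direction `a_{j+1}`). -/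
def xT (T : Tri) (j : Fin 6) : ℤ × ℤ :=
  T.1 + (if T.2 then
    (match (j : ℕ) with
     | 0 => ((0 : ℤ), (0 : ℤ)) | 1 => (0, 0) | 2 => (1, 0) | 3 => (1, 0) | 4 => (0, 1) | _ => (0, 1))
  else
    (match (j : ℕ) with
     | 0 => ((0 : ℤ), (0 : ℤ)) | 1 => (1, -1) | 2 => (1, -1) | 3 => (1, 0) | 4 => (1, 0) | _ => (0, 0)))

/-- The neighbouring triangle `T_j` of `T` sharing the edge with direction `a_{j+1}`. -/
def nbr (T : Tri) (j : Fin 6) : Tri :=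
  if T.2 then
    (T.1 + (match (j : ℕ) % 3 with | 0 => ((0 : ℤ), (0 : ℤ)) | 1 => (-1, 1) | _ => (0, 1)), false)
  else
    (T.1 + (match (j : ℕ) % 3 with | 0 => ((0 : ℤ), (0 : ℤ)) | 1 => (1, -1) | _ => (0, -1)), true)

/-- The triangle `T_{x,j} = conv{x, x + a_j, x + a_{j+1}}` (index `j` mod 6). -/
def Txj (x : ℤ × ℤ) (j : ℤ) : Tri :=
  match (j % 6).toNat with
  | 1 => (x, true)
  | 2 => (x + (-1, 1), false)
  | 3 => (x + (-1, 0), true)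
  | 4 => (x + (-1, 0), false)
  | 5 => (x + (0, -1), true)
  | _ => (x, false)

/-- The Cauchy–Born site potential `V^c(g) = (Ω₀/6) Σ_j W(∂_{T_{x,j}} y)` as a function
of the six differences `g = Dy(x)`. -/
def Vc (V : (Fin 6 → E2) → ℝ) (g : Fin 6 → E2) : ℝ :=
  Om0 / 6 * ∑ j : Fin 6, Wf V (solve2 (avec ((j : ℕ) + 1)) (avec ((j : ℕ) + 2)) (g j) (g (j + 1)))

/-- The atomistic stress `Σa(y;T)`. -/
def Sa (V : (Fin 6 → E2) → ℝ) (y : ℤ × ℤ → E2) (T : Tri) : Mat2 :=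
  Om0⁻¹ • ∑ j : Fin 6, outer (pd V j (Dfam y (xT T j))) (aFam j)

/-- The continuum stress `Σc¹(y;T) = ∂W(∂_T y)`. -/
def Sc1 (V : (Fin 6 → E2) → ℝ) (y : ℤ × ℤ → E2) (T : Tri) : Mat2 := DW V (triGrad y T)

/-- The continuum stress `Σc²(y;T)`. -/
def Sc2 (V : (Fin 6 → E2) → ℝ) (y : ℤ × ℤ → E2) (T : Tri) : Mat2 :=
  Om0⁻¹ • ∑ j : Fin 6, (2 : ℝ)⁻¹ •
    outer (pd V j (Famat (triGrad y T)) + pd V j (Famat (triGrad y (nbr T j)))) (aFam j)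

/-- The continuum stress `Σc³(y;T)`. -/
def Sc3 (V : (Fin 6 → E2) → ℝ) (y : ℤ × ℤ → E2) (T : Tri) : Mat2 :=
  Om0⁻¹ • ∑ j : Fin 6, outer (pd (Vc V) j (Dfam y (xT T j))) (aFam j)

/-- The interface region `ℐ` determined by the atomistic region `𝒜`. -/
def interf (A : Set (ℤ × ℤ)) : Set (ℤ × ℤ) :=
  {x | x ∉ A ∧ ∃ j : Fin 6, x + ed ((j : ℕ) + 1) ∈ A}

/-- The continuum region `𝒞 = ℒ ∖ (𝒜 ∪ ℐ)`. -/
def contR (A : Set (ℤ × ℤ)) : Set (ℤ × ℤ) := {x | x ∉ A ∧ x ∉ interf A}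

/-- The reconstructed interface potential `V^i(g) = V((Σ_i C_{j,i} g_i)_j)`. -/
def Vi (V : (Fin 6 → E2) → ℝ) (Cp : Fin 6 → Fin 6 → ℝ) (g : Fin 6 → E2) : ℝ :=
  V fun j => ∑ i : Fin 6, Cp j i • g i

/-- The hybrid site potential `V^ac_x`. -/
def Vac (V : (Fin 6 → E2) → ℝ) (C : ℤ × ℤ → Fin 6 → Fin 6 → ℝ) (A : Set (ℤ × ℤ))
    (x : ℤ × ℤ) : (Fin 6 → E2) → ℝ :=
  if x ∈ A then V else if x ∈ interf A then Vi V (C x) else Vc V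

/-- First variation `⟨δE_a(y), u⟩` of the atomistic energy. -/
def dEa (V : (Fin 6 → E2) → ℝ) (y u : ℤ × ℤ → E2) : ℝ :=
  ∑ᶠ n : ℤ × ℤ, ∑ j : Fin 6, dotE (pd V j (Dfam y n)) (Dfam u n j)

/-- First variation `⟨δE_c(y), u⟩` of the Cauchy–Born energy. -/
def dEc (V : (Fin 6 → E2) → ℝ) (y u : ℤ × ℤ → E2) : ℝ :=
  ∑ᶠ T : Tri, Om0 / 2 * frobI (DW V (triGrad y T)) (triGrad u T)

/-- First variation `⟨δE_ac(y), u⟩` of the a/c coupling energy. -/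
def dEac (V : (Fin 6 → E2) → ℝ) (C : ℤ × ℤ → Fin 6 → Fin 6 → ℝ) (A : Set (ℤ × ℤ))
    (y u : ℤ × ℤ → E2) : ℝ :=
  ∑ᶠ n : ℤ × ℤ, ∑ i : Fin 6, dotE (pd (Vac V C A n) i (Dfam y n)) (Dfam u n i)

/-- The a/c stress `Σac(y;T)`. -/
def Sac (V : (Fin 6 → E2) → ℝ) (C : ℤ × ℤ → Fin 6 → Fin 6 → ℝ) (A : Set (ℤ × ℤ))
    (y : ℤ × ℤ → E2) (T : Tri) : Mat2 :=
  Om0⁻¹ • ∑ j : Fin 6, outer (pd (Vac V C A (xT T j)) j (Dfam y (xT T j))) (aFam j)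

/-- `u ∈ 𝒰₀`: finitely supported displacement. -/
def FinSupp (u : ℤ × ℤ → E2) : Prop := (Function.support u).Finite

/-- `y ∈ 𝒴₀`: deformation with `y - id` finitely supported. -/
def inY0 (y : ℤ × ℤ → E2) : Prop := (Function.support fun n => y n - emb n).Finite

/-- The homogeneous deformation `y_F(x) = Fx`. -/
def yhom (F : Mat2) : ℤ × ℤ → E2 := fun n => mvec F (emb n)

/-- One-sidedness: `C_{j,i} = 0` unless `i ∈ {j-1, j, j+1}` (mod 6). -/
def oneSided (Cp : Fin 6 → Fin 6 → ℝ) : Prop :=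
  ∀ j i : Fin 6, i ≠ j - 1 → i ≠ j → i ≠ j + 1 → Cp j i = 0

/-- Local energy consistency: `C_{j,j-1} = C_{j,j+1} = 1 - C_{j,j}`. -/
def eCons (Cp : Fin 6 → Fin 6 → ℝ) : Prop :=
  ∀ j : Fin 6, Cp j (j - 1) = 1 - Cp j j ∧ Cp j (j + 1) = 1 - Cp j j

/-- The coefficients corresponding to the atomistic site potential (`C_{x,j} = 1`). -/
def atomC : Fin 6 → Fin 6 → ℝ := fun j i => if i = j then 1 else 0

/-- The coefficients corresponding to the Cauchy–Born site potential (`C_{x,j} = 2/3`). -/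
def cbC : Fin 6 → Fin 6 → ℝ := fun j i =>
  if i = j then 2 / 3 else if i = j - 1 ∨ i = j + 1 then 1 / 3 else 0

/-- The negative force `-f_ac(x; y_F) = Σ_{j,i} (C_{x-a_i,j,i} - C_{x,j,i}) ∂_j V(F𝐚)`. -/
def forceSum (C : ℤ × ℤ → Fin 6 → Fin 6 → ℝ) (V : (Fin 6 → E2) → ℝ) (F : Mat2)
    (x : ℤ × ℤ) : E2 :=
  ∑ j : Fin 6, ∑ i : Fin 6, (C (x - ed ((i : ℕ) + 1)) j i - C x j i) • pd V j (Famat F)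

/-- The force consistency condition (5.2) on the coefficients. -/
def fCons (C : ℤ × ℤ → Fin 6 → Fin 6 → ℝ) : Prop :=
  ∀ j : Fin 6, (j : ℕ) < 3 → ∀ x : ℤ × ℤ,
    ∑ i : Fin 6, (C (x - ed ((i : ℕ) + 1)) j i - C (x - ed ((i : ℕ) + 1)) (j + 3) i
      - C x j i + C x (j + 3) i) = 0

/-- `|D²y(x)| = max_{i,j} |D_i D_j y(x)|`. -/
def D2n (y : ℤ × ℤ → E2) (n : ℤ × ℤ) : ℝ :=
  ⨆ i : Fin 6, ⨆ j : Fin 6, ‖Dd ((i : ℕ) + 1) (Dd ((j : ℕ) + 1) y) n‖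

/-- `|D³y(x)| = max_{i,j,k} |D_i D_j D_k y(x)|`. -/
def D3n (y : ℤ × ℤ → E2) (n : ℤ × ℤ) : ℝ :=
  ⨆ i : Fin 6, ⨆ j : Fin 6, ⨆ k : Fin 6,
    ‖Dd ((i : ℕ) + 1) (Dd ((j : ℕ) + 1) (Dd ((k : ℕ) + 1) y)) n‖

/-- `ℓ^p` norm of a lattice function over a subset `S ⊆ ℒ`. -/
def lpNormS (p : ℝ≥0∞) (f : ℤ × ℤ → ℝ) (S : Set (ℤ × ℤ)) : ℝ :=
  if p = ⊤ then ⨆ x : S, |f x| else (∑ᶠ x ∈ S, |f x| ^ p.toReal) ^ (1 / p.toReal)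

/-- `‖∂u‖_{L^q}` for the piecewise affine interpolant. -/
def gradLp (q : ℝ≥0∞) (u : ℤ × ℤ → E2) : ℝ :=
  if q = ⊤ then ⨆ T : Tri, frobN (triGrad u T)
  else (∑ᶠ T : Tri, Om0 / 2 * frobN (triGrad u T) ^ q.toReal) ^ (1 / q.toReal)

/-- `𝒯_𝒜`: triangles with `T ∩ (ℐ ∪ 𝒞) = ∅`. -/
def TA (A : Set (ℤ × ℤ)) : Set Tri := {T | ∀ n ∈ triVerts T, n ∉ interf A ∧ n ∉ contR A}

/-- `𝒯_𝒞`: triangles with `T ∩ (ℐ ∪ 𝒜) = ∅`. -/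
def TC (A : Set (ℤ × ℤ)) : Set Tri := {T | ∀ n ∈ triVerts T, n ∉ interf A ∧ n ∉ A}

/-- `𝒯_ℐ = 𝒯 ∖ (𝒯_𝒜 ∪ 𝒯_𝒞)`. -/
def TI (A : Set (ℤ × ℤ)) : Set Tri := {T | T ∉ TA A ∧ T ∉ TC A}

/-- The midpoint of the edge `(x, x + a_j)`. -/
def edgeMid (x : ℤ × ℤ) (j : ℤ) : E2 := emb x + (2 : ℝ)⁻¹ • avec j

/-- The edge `(x, x+a_j)` belongs to `𝔉_𝒜` (it lies in a triangle of `𝒯_𝒜`). -/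
def edgeInA (A : Set (ℤ × ℤ)) (x : ℤ × ℤ) (j : ℤ) : Prop :=
  Txj x j ∈ TA A ∨ Txj x (j - 1) ∈ TA A

/-- The edge `(x, x+a_j)` belongs to `𝔉_𝒞`. -/
def edgeInC (A : Set (ℤ × ℤ)) (x : ℤ × ℤ) (j : ℤ) : Prop :=
  Txj x j ∈ TC A ∨ Txj x (j - 1) ∈ TC A

/-- Rotation by `π/2`. -/
def Jmat : Mat2 := !![0, -1; 1, 0]

/-- Midpoint continuity of a piecewise affine field: membership in `N1(𝒯)²`. -/
def midCont (ψ : Tri → E2 → E2) : Prop :=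
  ∀ (x : ℤ × ℤ) (j : ℤ), ψ (Txj x j) (edgeMid x j) = ψ (Txj x (j - 1)) (edgeMid x j)

/-- `ψ` is piecewise affine with Jacobian `G T` on each triangle `T`. -/
def affWith (ψ : Tri → E2 → E2) (G : Tri → Mat2) : Prop :=
  ∀ (T : Tri) (z w : E2), ψ T z - ψ T w = mvec (G T) (z - w)

/-- Assumption 4.1: every interface atom has exactly two interface neighbours and
at least one continuum neighbour. -/
def InterfaceOK (A : Set (ℤ × ℤ)) : Prop :=
  ∀ x ∈ interf A,
    ({j : Fin 6 | x + ed ((j : ℕ) + 1) ∈ interf A}).ncard = 2 ∧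
    ∃ j : Fin 6, x + ed ((j : ℕ) + 1) ∈ contR A

/-- The patch test: local energy consistency and local force consistency for all `V ∈ 𝒱`. -/
def PatchTest (C : ℤ × ℤ → Fin 6 → Fin 6 → ℝ) (A : Set (ℤ × ℤ)) : Prop :=
  (∀ V, memV V → ∀ F : Mat2, ∀ x ∈ interf A, Vi V (C x) (Famat F) = V (Famat F)) ∧
  (∀ V, memV V → ∀ F : Mat2, ∀ u, FinSupp u → dEac V C A (yhom F) u = 0)

/-- The closed triangle `T ⊆ ℝ²`. -/
def triSet (T : Tri) : Set E2 :=
  convexHull ℝ {emb T.1, emb (T.1 + (1, 0)), emb (T.1 + (if T.2 then ((0 : ℤ), (1 : ℤ)) else (1, -1)))}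

/-- The closed edge `[x, x + a_j] ⊆ ℝ²`. -/
def edgeSeg (x : ℤ × ℤ) (j : ℤ) : Set E2 := segment ℝ (emb x) (emb (x + ed j))

/-- The atomistic region of the flat interface: `{x ∈ ℒ : x₂ < 0}`. -/
def flatA : Set (ℤ × ℤ) := {n | emb n 1 < 0}

/-- The extended interface region `ℐ^ext = {x ∈ ℒ : dist(x, ℐ) ≤ 1}`. -/
def Iext (A : Set (ℤ × ℤ)) : Set (ℤ × ℤ) := {x | ∃ z ∈ interf A, ‖emb x - emb z‖ ≤ 1}

/-- Embedding `Fin 3 → Fin 6`. -/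
def jlift (j : Fin 3) : Fin 6 := ⟨(j : ℕ), by omega⟩

lemma ed_add_three (j : ℤ) : ed (j + 3) = -ed j := by
  have h : (j + 3) % 6 = (j % 6 + 3) % 6 := by omega
  have h0 : 0 ≤ j % 6 := Int.emod_nonneg j (by norm_num)
  have h6 : j % 6 < 6 := Int.emod_lt_of_pos j (by norm_num)
  simp only [ed, h]
  generalize j % 6 = r at *
  interval_cases r <;> rfl

lemma Dd_add_three (j : ℤ) (u : ℤ × ℤ → E2) (x : ℤ × ℤ) :
    Dd (j + 3) u x = -Dd j u (x - ed j) := by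
  simp only [Dd, ed_add_three, sub_add_cancel, ← sub_eq_add_neg, neg_sub]

lemma avec_add_three (j : ℤ) : avec (j + 3) = -avec j := by
  have h : ((j : ℝ) + 3 - 1) * (π / 3) = ((j : ℝ) - 1) * (π / 3) + π := by ring
  ext i; fin_cases i <;> simp [avec, toE2, h, Real.cos_add_pi, Real.sin_add_pi]

lemma avec_add_avec_add_two (j : ℤ) : avec j + avec (j + 2) = avec (j + 1) := by
  set φ : ℝ := (j : ℝ) * (π / 3)
  have h0 : ((j : ℝ) - 1) * (π / 3) = φ - π / 3 := by ring
  have h1 : ((j + 1 : ℤ) - 1 : ℝ) * (π / 3) = φ := by push_cast; ring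
  have h2 : ((j + 2 : ℤ) - 1 : ℝ) * (π / 3) = φ + π / 3 := by push_cast; ring
  ext i; fin_cases i
  · simp only [avec, toE2, h0, h1, h2, PiLp.add_apply, Fin.zero_eta, Matrix.cons_val_zero,
      Real.cos_add, Real.cos_sub, Real.cos_pi_div_three, Real.sin_pi_div_three]
    ring
  · simp only [avec, toE2, h0, h1, h2, PiLp.add_apply, Fin.mk_one, Matrix.cons_val_one,
      Matrix.cons_val_fin_one, Real.sin_add, Real.sin_sub, Real.cos_pi_div_three,
      Real.sin_pi_div_three]
    ring

lemma aFam_add_three (i : Fin 6) : aFam (i + 3) = -aFam i := by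
  have h := avec_add_three
  fin_cases i
  · exact h 1
  · exact h 2
  · exact h 3
  · exact neg_eq_iff_eq_neg.1 (h 1).symm
  · exact neg_eq_iff_eq_neg.1 (h 2).symm
  · exact neg_eq_iff_eq_neg.1 (h 3).symm

lemma avec_three_eq : avec 3 = avec 2 - avec 1 := by
  have h := avec_add_avec_add_two 1
  norm_num at h
  rw [← h]; abel

lemma avec_six_eq : avec 6 = avec 1 - avec 2 := by
  rw [show (6 : ℤ) = 3 + 3 by norm_num, avec_add_three, avec_three_eq, neg_sub]

lemma avec_one_apply : avec 1 0 = 1 ∧ avec 1 1 = 0 := by simp [avec, toE2]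

lemma avec_two_apply_one : avec 2 1 = √3 / 2 := by
  simp [avec, toE2, show ((2 : ℝ) - 1) * (π / 3) = π / 3 by ring]

lemma det_avec_one_two : avec 1 0 * avec 2 1 - avec 1 1 * avec 2 0 ≠ 0 := by
  simp [avec_one_apply, avec_two_apply_one]

lemma det_avec_one_six : avec 1 0 * avec 6 1 - avec 1 1 * avec 6 0 ≠ 0 := by
  simp [avec_six_eq, avec_one_apply, avec_two_apply_one]

lemma Om0_ne_zero : Om0 ≠ 0 := by unfold Om0; positivity

lemma val_jlift (j : Fin 3) : (jlift j : ℕ) = j := rfl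

lemma sum_fin_six_eq_sum_fin_three {M : Type*} [AddCommMonoid M] (f : Fin 6 → M) :
    ∑ j, f j = ∑ j : Fin 3, (f (jlift j) + f (jlift j + 3)) := by
  simp only [Fin.sum_univ_six, Fin.sum_univ_three]
  change _ = f 0 + f 3 + (f 1 + f 4) + (f 2 + f 5)
  abel

lemma mvec_add (F : Mat2) (v w : E2) : mvec F (v + w) = mvec F v + mvec F w := by
  ext i; simp [mvec, toE2, mul_add, Finset.sum_add_distrib]

lemma mvec_neg (F : Mat2) (v : E2) : mvec F (-v) = -mvec F v := by
  ext i; simp [mvec, toE2]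

lemma mvec_sub (F : Mat2) (v w : E2) : mvec F (v - w) = mvec F v - mvec F w := by
  rw [sub_eq_add_neg, mvec_add, mvec_neg, ← sub_eq_add_neg]

section solve2

variable {b₁ b₂ : E2} (hdet : b₁ 0 * b₂ 1 - b₁ 1 * b₂ 0 ≠ 0) (v₁ v₂ : E2)
include hdet

lemma mvec_solve2_left : mvec (solve2 b₁ b₂ v₁ v₂) b₁ = v₁ := by
  ext i
  simp only [mvec, toE2, solve2, Fin.sum_univ_two, PiLp.toLp_apply, if_true,
    if_neg (show (1 : Fin 2) ≠ 0 by decide)]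
  rw [div_mul_eq_mul_div, div_mul_eq_mul_div, ← add_div, div_eq_iff hdet]
  ring

lemma mvec_solve2_right : mvec (solve2 b₁ b₂ v₁ v₂) b₂ = v₂ := by
  ext i
  simp only [mvec, toE2, solve2, Fin.sum_univ_two, PiLp.toLp_apply, if_true,
    if_neg (show (1 : Fin 2) ≠ 0 by decide)]
  rw [div_mul_eq_mul_div, div_mul_eq_mul_div, ← add_div, div_eq_iff hdet]
  ring

end solve2

theorem triGrad_mul_aFam (u : ℤ × ℤ → E2) (T : Tri) (j : Fin 3) :
    mvec (triGrad u T) (aFam (jlift j)) = Dd ((j : ℕ) + 1) u (xT T (jlift j)) := by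
  obtain ⟨n, _ | _⟩ := T <;> fin_cases j
  · show mvec (solve2 (avec 1) (avec 6) (Dd 1 u n) (Dd 6 u n)) (avec 1) = Dd 1 u (n + (0, 0))
    rw [mvec_solve2_left det_avec_one_six, Prod.mk_zero_zero, add_zero]
  · show mvec (solve2 (avec 1) (avec 6) (Dd 1 u n) (Dd 6 u n)) (avec 2) = Dd 2 u (n + (1, -1))
    rw [show avec 2 = avec 1 - avec 6 by rw [avec_six_eq]; abel, mvec_sub,
      mvec_solve2_left det_avec_one_six, mvec_solve2_right det_avec_one_six]
    show u (n + (1, 0)) - u n - (u (n + (1, -1)) - u n) = u (n + (1, -1) + (0, 1)) - u (n + (1, -1))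
    rw [add_assoc, show ((1, -1) : ℤ × ℤ) + (0, 1) = (1, 0) by decide]
    abel
  · show mvec (solve2 (avec 1) (avec 6) (Dd 1 u n) (Dd 6 u n)) (avec 3) = Dd 3 u (n + (1, -1))
    rw [show avec 3 = -avec 6 by rw [avec_six_eq, avec_three_eq, neg_sub], mvec_neg,
      mvec_solve2_right det_avec_one_six]
    show -(u (n + (1, -1)) - u n) = u (n + (1, -1) + (-1, 1)) - u (n + (1, -1))
    rw [add_assoc, show ((1, -1) : ℤ × ℤ) + (-1, 1) = 0 by decide, add_zero, neg_sub]
  · show mvec (solve2 (avec 1) (avec 2) (Dd 1 u n) (Dd 2 u n)) (avec 1) = Dd 1 u (n + (0, 0))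
    rw [mvec_solve2_left det_avec_one_two, Prod.mk_zero_zero, add_zero]
  · show mvec (solve2 (avec 1) (avec 2) (Dd 1 u n) (Dd 2 u n)) (avec 2) = Dd 2 u (n + (0, 0))
    rw [mvec_solve2_right det_avec_one_two, Prod.mk_zero_zero, add_zero]
  · show mvec (solve2 (avec 1) (avec 2) (Dd 1 u n) (Dd 2 u n)) (avec 3) = Dd 3 u (n + (1, 0))
    rw [avec_three_eq, mvec_sub, mvec_solve2_left det_avec_one_two,
      mvec_solve2_right det_avec_one_two]
    show u (n + (0, 1)) - u n - (u (n + (1, 0)) - u n) = u (n + (1, 0) + (-1, 1)) - u (n + (1, 0))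
    rw [add_assoc, show ((1, 0) : ℤ × ℤ) + (-1, 1) = (0, 1) by decide]
    abel

lemma Famat_add_smul (F G : Mat2) (t : ℝ) : Famat (F + t • G) = Famat F + t • Famat G := by
  funext j; ext i
  simp only [Famat, mvec, toE2, Matrix.add_apply, Matrix.smul_apply, smul_eq_mul,
    Fin.sum_univ_two, Pi.add_apply, Pi.smul_apply, PiLp.add_apply, PiLp.smul_apply]
  ring

lemma Famat_eq_sum_single (G : Mat2) :
    Famat G = ∑ i, ∑ k, G i k • Famat (Matrix.single i k 1) := by
  funext j; ext l
  fin_cases l <;> simp [Famat, mvec, toE2, Fin.sum_univ_two, Matrix.single_apply]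

lemma Famat_add_three (F : Mat2) (i : Fin 6) : Famat F (i + 3) = -Famat F i := by
  simp only [Famat, aFam_add_three, mvec_neg]

lemma sum_smul_unitv (h : Fin 6 → E2) : ∑ j, ∑ k, h j k • unitv j k = h := by
  funext i
  simp only [Finset.sum_apply, Pi.smul_apply, unitv, smul_ite, smul_zero]
  ext l; fin_cases l <;> simp [toE2, Fin.sum_univ_two]

lemma dotE_neg_neg (v w : E2) : dotE (-v) (-w) = dotE v w := by simp [dotE]

lemma dotE_add_left (v v' w : E2) : dotE (v + v') w = dotE v w + dotE v' w := by
  simp [dotE, add_mul, Finset.sum_add_distrib]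

lemma dotE_sub_left (v v' w : E2) : dotE (v - v') w = dotE v w - dotE v' w := by
  simp [dotE, sub_mul, Finset.sum_sub_distrib]

lemma dotE_neg_right (v w : E2) : dotE v (-w) = -dotE v w := by
  simp [dotE, Finset.sum_neg_distrib]

section Potential

variable {V : (Fin 6 → E2) → ℝ}

lemma pd_add_three (hsym : ∀ g : Fin 6 → E2, V (fun j => -g (j + 3)) = V g) {g : Fin 6 → E2}
    (hg : ∀ i, g (i + 3) = -g i) (j : Fin 6) : pd V (j + 3) g = -pd V j g := by
  have hline (k : Fin 2) (t : ℝ) :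
      V (g + t • unitv (j + 3) k) = V (g + (-t) • unitv j k) := by
    rw [← hsym]
    congr 1; funext i
    simp only [Pi.add_apply, Pi.smul_apply, hg, unitv, add_left_inj]
    rw [neg_add, neg_neg, neg_smul]
  ext k
  simp only [pd, hline, toE2, PiLp.toLp_apply, PiLp.neg_apply]
  exact (deriv_comp_neg (f := fun s : ℝ => V (g + s • unitv j k)) 0).trans (by rw [neg_zero])

lemma pd_apply_eq_fderiv {g : Fin 6 → E2} (hV : DifferentiableAt ℝ V g) (j : Fin 6)
    (k : Fin 2) :
    pd V j g k = fderiv ℝ V g (unitv j k) :=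
  hV.lineDeriv_eq_fderiv

lemma fderiv_eq_sum_dotE_pd {g : Fin 6 → E2} (hV : DifferentiableAt ℝ V g) (h : Fin 6 → E2) :
    fderiv ℝ V g h = ∑ j, dotE (pd V j g) (h j) := by
  conv_lhs => rw [← sum_smul_unitv h]
  simp [map_sum, dotE, pd_apply_eq_fderiv hV, mul_comm]

lemma DW_apply (hV : Differentiable ℝ V) (F : Mat2) (i k : Fin 2) :
    DW V F i k = Om0⁻¹ * fderiv ℝ V (Famat F) (Famat (Matrix.single i k 1)) := by
  simp only [DW, Wf, Famat_add_smul, deriv_div_const]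
  rw [← (hV _).lineDeriv_eq_fderiv, lineDeriv, div_eq_inv_mul]

lemma frobI_DW (hV : Differentiable ℝ V) (F G : Mat2) :
    frobI (DW V F) G = Om0⁻¹ * fderiv ℝ V (Famat F) (Famat G) := by
  conv_rhs => rw [Famat_eq_sum_single G]
  simp only [frobI, DW_apply hV, Fin.sum_univ_two, map_add, map_smul, smul_eq_mul]
  ring

theorem Om0_div_two_mul_frobI_DW (hV : memV V) (F G : Mat2) :
    Om0 / 2 * frobI (DW V F) G =
      ∑ j : Fin 3, dotE (pd V (jlift j) (Famat F)) (mvec G (aFam (jlift j))) := by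
  have hdiff : Differentiable ℝ V := hV.1.differentiable (by norm_num)
  have hopp (j : Fin 3) : dotE (pd V (jlift j + 3) (Famat F)) (Famat G (jlift j + 3)) =
      dotE (pd V (jlift j) (Famat F)) (Famat G (jlift j)) := by
    rw [pd_add_three hV.2 (Famat_add_three F), Famat_add_three, dotE_neg_neg]
  rw [frobI_DW hdiff, fderiv_eq_sum_dotE_pd (hdiff _), sum_fin_six_eq_sum_fin_three]
  simp only [hopp, ← two_mul, ← Finset.mul_sum]
  field_simp [Om0_ne_zero]
  rfl

theorem Om0_div_two_mul_frobI_DW_triGrad (hV : memV V) (y u : ℤ × ℤ → E2) (T : Tri) :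
    Om0 / 2 * frobI (DW V (triGrad y T)) (triGrad u T) =
      ∑ j : Fin 3, dotE (pd V (jlift j) (Famat (triGrad y T)))
        (Dd ((j : ℕ) + 1) u (xT T (jlift j))) := by
  simp only [Om0_div_two_mul_frobI_DW hV, triGrad_mul_aFam]

end Potential

lemma hasFiniteSupport_dotE_right {α : Type*} (w : α → E2) {v : α → E2}
    (hv : v.HasFiniteSupport) : (fun x => dotE (w x) (v x)).HasFiniteSupport :=
  hv.subset fun x hx h0 => hx (by simp [h0, dotE])

lemma hasFiniteSupport_Dd {u : ℤ × ℤ → E2} (hu : u.HasFiniteSupport) (j : ℤ) :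
    (Dd j u).HasFiniteSupport :=
  (hu.fun_comp_of_injective (add_left_injective (ed j))).sub hu

/-- `edgeTriEquiv j (x, b)` is the triangle of orientation `b` whose edge in direction `a_{j+1}`
starts at `x`. -/
def edgeTriEquiv (j : Fin 6) : (ℤ × ℤ) × Bool ≃ Tri where
  toFun p := (p.1 - xT (0, p.2) j, p.2)
  invFun T := (xT T j, T.2)
  left_inv p := by simp [xT]
  right_inv T := by simp [xT]

lemma xT_edgeTriEquiv (j : Fin 6) (p : (ℤ × ℤ) × Bool) : xT (edgeTriEquiv j p) j = p.1 := by
  simp [edgeTriEquiv, xT]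

theorem finsum_tri_eq_finsum_edges {M : Type*} [AddCommMonoid M] (j : Fin 6) (f : Tri → M)
    (hf : (f ∘ edgeTriEquiv j).HasFiniteSupport) :
    ∑ᶠ T, f T = ∑ᶠ x, (f (edgeTriEquiv j (x, true)) + f (edgeTriEquiv j (x, false))) := by
  rw [← finsum_comp_equiv (edgeTriEquiv j)]
  exact (finsum_curry _ hf).trans (finsum_congr fun x => by
    simp only [finsum_eq_sum_of_fintype, Fintype.sum_bool, Function.comp_apply])

lemma edgeTriEquiv_pair {M : Type*} [AddCommMonoid M] (j : Fin 3) (x : ℤ × ℤ) (f : Tri → M) :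
    f (edgeTriEquiv (jlift j) (x, true)) + f (edgeTriEquiv (jlift j) (x, false)) =
      f (Txj x ((j : ℕ) + 1)) + f (Txj x (j : ℕ)) := by
  fin_cases j
  · congr 2 <;> simp [edgeTriEquiv, xT, Txj, jlift]
  · rw [add_comm]
    congr 2
    simp [edgeTriEquiv, xT, Txj, jlift]
  · congr 2

theorem dEc_eq_finsum_edges {V : (Fin 6 → E2) → ℝ} (hV : memV V) (y : ℤ × ℤ → E2)
    {u : ℤ × ℤ → E2} (hu : u.HasFiniteSupport) :
    dEc V y u = ∑ᶠ x : ℤ × ℤ, ∑ j : Fin 3,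
        dotE (pd V (jlift j) (Famat (triGrad y (Txj x ((j : ℕ) + 1)))) +
              pd V (jlift j) (Famat (triGrad y (Txj x (j : ℕ)))))
          (Dd ((j : ℕ) + 1) u x) := by
  set φ : Fin 3 → Tri → ℝ := fun j T =>
    dotE (pd V (jlift j) (Famat (triGrad y T))) (Dd ((j : ℕ) + 1) u (xT T (jlift j)))
  have hφ_edge (j : Fin 3) (p : (ℤ × ℤ) × Bool) : φ j (edgeTriEquiv (jlift j) p) =
      dotE (pd V (jlift j) (Famat (triGrad y (edgeTriEquiv (jlift j) p))))
        (Dd ((j : ℕ) + 1) u p.1) := by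
    simp only [φ, xT_edgeTriEquiv]
  have hφ_fin (j : Fin 3) : (φ j ∘ edgeTriEquiv (jlift j)).HasFiniteSupport := by
    refine ((hasFiniteSupport_Dd hu ((j : ℕ) + 1)).prod Set.finite_univ).subset
      fun p hp => ⟨fun h0 => hp ?_, trivial⟩
    simp [hφ_edge, h0, dotE]
  have hφ_fin' (j : Fin 3) : (φ j).HasFiniteSupport := by
    have h := (hφ_fin j).comp_of_injective (edgeTriEquiv (jlift j)).symm.injective
    rwa [Function.comp_assoc, Equiv.self_comp_symm, Function.comp_id] at h
  calc dEc V y u = ∑ᶠ T, ∑ j, φ j T := finsum_congr (Om0_div_two_mul_frobI_DW_triGrad hV y u)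
    _ = ∑ j, ∑ᶠ T, φ j T := finsum_sum_comm _ _ fun j _ => hφ_fin' j
    _ = _ := by
      rw [finsum_sum_comm _ _ fun j _ => hasFiniteSupport_dotE_right _ (hasFiniteSupport_Dd hu _)]
      refine Finset.sum_congr rfl fun j _ => ?_
      rw [finsum_tri_eq_finsum_edges (jlift j) (φ j) (hφ_fin j)]
      refine finsum_congr fun x => ?_
      rw [hφ_edge, hφ_edge, dotE_add_left]
      exact edgeTriEquiv_pair j x
        fun T => dotE (pd V (jlift j) (Famat (triGrad y T))) (Dd ((j : ℕ) + 1) u x)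

theorem finsum_dotE_Dd_add_three (w : ℤ × ℤ → E2) (j : ℤ) (u : ℤ × ℤ → E2) :
    ∑ᶠ x, dotE (w x) (Dd (j + 3) u x) = -∑ᶠ x, dotE (w (x + ed j)) (Dd j u x) := by
  simp only [Dd_add_three, dotE_neg_right]
  rw [finsum_neg_distrib, ← finsum_comp_equiv (Equiv.addRight (ed j))]
  simp only [Equiv.coe_addRight, add_sub_cancel_right]

theorem finsum_bonds_eq_finsum_edges {u : ℤ × ℤ → E2} (hu : u.HasFiniteSupport)
    (w : Fin 6 → ℤ × ℤ → E2) :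
    ∑ᶠ x, ∑ j : Fin 6, dotE (w j x) (Dd ((j : ℕ) + 1) u x) =
      ∑ᶠ x, ∑ j : Fin 3,
        dotE (w (jlift j) x - w (jlift j + 3) (x + ed ((j : ℕ) + 1)))
          (Dd ((j : ℕ) + 1) u x) := by
  have hfin (v : ℤ × ℤ → E2) (k : ℤ) : (fun x => dotE (v x) (Dd k u x)).HasFiniteSupport :=
    hasFiniteSupport_dotE_right v (hasFiniteSupport_Dd hu k)
  have hidx (j : Fin 3) : (((jlift j + 3 : Fin 6) : ℕ) : ℤ) + 1 = ((j : ℕ) + 1) + 3 := by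
    fin_cases j <;> rfl
  simp only [sum_fin_six_eq_sum_fin_three, hidx, val_jlift, dotE_sub_left]
  rw [finsum_sum_comm _ _ fun j _ => (hfin _ _).fun_add (hfin _ _),
    finsum_sum_comm _ _ fun j _ => (hfin _ _).fun_sub (hfin _ _)]
  refine Finset.sum_congr rfl fun j _ => ?_
  rw [finsum_add_distrib (hfin _ _) (hfin _ _), finsum_sub_distrib (hfin _ _) (hfin _ _),
    finsum_dotE_Dd_add_three, sub_eq_add_neg]

end AC

open AC in
theorem edge_representations_general
    (V : (Fin 6 → E2) → ℝ) (hV : memV V)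
    (y : ℤ × ℤ → E2) (u : ℤ × ℤ → E2) (hu : FinSupp u) :
    dEc V y u = (∑ᶠ x : ℤ × ℤ, ∑ j : Fin 3,
        dotE (pd V (jlift j) (Famat (triGrad y (Txj x ((j : ℕ) + 1)))) +
              pd V (jlift j) (Famat (triGrad y (Txj x (j : ℕ)))))
          (Dd ((j : ℕ) + 1) u x)) ∧
    dEa V y u = (∑ᶠ x : ℤ × ℤ, ∑ j : Fin 3,
        dotE (pd V (jlift j) (Dfam y x) -
              pd V (jlift j + 3) (Dfam y (x + ed ((j : ℕ) + 1))))
          (Dd ((j : ℕ) + 1) u x)) :=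
  ⟨dEc_eq_finsum_edges hV y hu, finsum_bonds_eq_finsum_edges hu fun j x => pd V j (Dfam y x)⟩

open AC in
/-- edge representations of the first variations `δE_c` and `δE_a`
(Lemma 4.1). -/
theorem edge_representations
    (V : (Fin 6 → E2) → ℝ) (hV : memV V) (hV0 : V aFam = 0)
    (y : ℤ × ℤ → E2) (hy : inY0 y) (u : ℤ × ℤ → E2) (hu : FinSupp u) :
    dEc V y u = (∑ᶠ x : ℤ × ℤ, ∑ j : Fin 3,
        dotE (pd V (jlift j) (Famat (triGrad y (Txj x ((j : ℕ) + 1)))) +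
              pd V (jlift j) (Famat (triGrad y (Txj x (j : ℕ)))))
          (Dd ((j : ℕ) + 1) u x)) ∧
    dEa V y u = (∑ᶠ x : ℤ × ℤ, ∑ j : Fin 3,
        dotE (pd V (jlift j) (Dfam y x) -
              pd V (jlift j + 3) (Dfam y (x + ed ((j : ℕ) + 1))))
          (Dd ((j : ℕ) + 1) u x)) :=
  edge_representations_general V hV y u hu
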